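/- Syntactic correspondence for the CEK machine: for any closed term t of the pure lambda-calculus, the closure t[∅] of the λρ̂-calculus evaluates to a value v under the reduction-based evaluation function (iterated left-to-right applicative-order one-step reduction with the contraction rules Var, Beta, Prop) if and only if the CEK machine, started in configuration ⟨t, ∅, []⟩_eval, halts with the value v (identifying closures (λx.t)[s] with CEK closures [x, t, s]). -/

import Mathlib

/-- Terms of the pure λ-calculus. -/
inductive Tm : Type
  | var : String → Tm
  | lam : String → Tm → Tm
  | app : Tm → Tm → Tm

mutual
  /-- Closures of the λρ̂-calculus: c ::= t[s] | c c. -/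
  inductive Clo : Type
    | sub : Tm → Subst → Clo
    | app : Clo → Clo → Clo
  /-- Values: v ::= (λx.t)[s]. -/
  inductive Val : Type
    | clos : String → Tm → Subst → Val
  /-- Explicit substitutions. -/
  inductive Subst : Type
    | empty : Subst
    | ext : String → Val → Subst → Subst
  /-- Left-to-right applicative-order reduction contexts:
  C ::= [] | C[[] c] | C[v []]. -/
  inductive Ctx : Type
    | hole : Ctx
    | arg : Ctx → Clo → Ctx
    | fnv : Ctx → Val → Ctx
end

/-- The syntactic coercion ↑ mapping a value into a closure. -/
def upv : Val → Clo
  | .clos x t s => .sub (.lam x t) s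

/-- Lookup in an explicit substitution. -/
def lookup (x : String) : Subst → Option Val
  | .empty => none
  | .ext y v s => if x = y then some v else lookup x s

/-- Potential redexes: r ::= x[s] | v v | (t0 t1)[s]. -/
inductive Red : Type
  | var : String → Subst → Red
  | app : Val → Val → Red
  | prop : Tm → Tm → Subst → Red

/-- The coercion mapping a potential redex to the closure it stands for. -/
def upr : Red → Clo
  | .var x s => .sub (.var x) s
  | .app v0 v1 => .app (upv v0) (upv v1)
  | .prop t0 t1 s => .sub (.app t0 t1) s

/-- Plugging a closure into a reduction context (a total function). -/
def plug : Ctx → Clo → Clo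
  | .hole, c => c
  | .arg C c1, c0 => plug C (.app c0 c1)
  | .fnv C v0, c1 => plug C (.app (upv v0) c1)

/-- States of the decomposition transition system. -/
inductive DConf : Type
  | clos : Clo → Ctx → DConf
  | cont : Ctx → Val → DConf
  | val : Val → DConf
  | dec : Red → Ctx → DConf

/-- The decomposition transition system of the λρ̂-calculus, for
left-to-right applicative order: it maps a value closure to VAL(v) and a
non-value closure to DEC(r,C) where r is the left-to-right innermost
potential redex and C the surrounding context. -/
inductive DStep : DConf → DConf → Prop
  | varsub (x : String) (s : Subst) (C : Ctx) :
      DStep (.clos (.sub (.var x) s) C) (.dec (.var x s) C)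
  | lamsub (x : String) (t : Tm) (s : Subst) (C : Ctx) :
      DStep (.clos (.sub (.lam x t) s) C) (.cont C (.clos x t s))
  | appsub (t0 t1 : Tm) (s : Subst) (C : Ctx) :
      DStep (.clos (.sub (.app t0 t1) s) C) (.dec (.prop t0 t1 s) C)
  | app (c0 c1 : Clo) (C : Ctx) :
      DStep (.clos (.app c0 c1) C) (.clos c0 (.arg C c1))
  | conthole (v : Val) : DStep (.cont .hole v) (.val v)
  | contarg (C : Ctx) (c1 : Clo) (v0 : Val) :
      DStep (.cont (.arg C c1) v0) (.clos c1 (.fnv C v0))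
  | contfnv (C : Ctx) (v0 v1 : Val) :
      DStep (.cont (.fnv C v0) v1) (.dec (.app v0 v1) C)

/-- The context-insensitive contraction rules Var, Beta and Prop of the
λρ̂-calculus. -/
inductive Contract : Red → Clo → Prop
  | var (x : String) (s : Subst) (v : Val) :
      lookup x s = some v → Contract (.var x s) (upv v)
  | beta (x : String) (t : Tm) (s : Subst) (v : Val) :
      Contract (.app (.clos x t s) v) (.sub t (.ext x v s))
  | prop (t0 t1 : Tm) (s : Subst) :
      Contract (.prop t0 t1 s) (.app (.sub t0 s) (.sub t1 s))

/-- One-step left-to-right applicative-order reduction: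
decompose, contract, plug. -/
def Reduce (c c' : Clo) : Prop :=
  ∃ r C c₀,
    Relation.ReflTransGen DStep (.clos c .hole) (.dec r C) ∧
    Contract r c₀ ∧
    plug C c₀ = c'

/-- Evaluation contexts of the CEK machine. -/
inductive MCtx : Type
  | END : MCtx
  | ARG : Tm → Subst → MCtx → MCtx
  | FUN : Val → MCtx → MCtx

/-- Configurations of the CEK machine, identifying calculus closures
(λx.t)[s] with CEK closures [x,t,s]. -/
inductive CekConf : Type
  | eval : Tm → Subst → MCtx → CekConf
  | cont : MCtx → Val → CekConf
  | done : Val → CekConf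

/-- The CEK machine. -/
inductive CekStep : CekConf → CekConf → Prop
  | var (x : String) (e : Subst) (v : Val) (C : MCtx) :
      lookup x e = some v → CekStep (.eval (.var x) e C) (.cont C v)
  | lam (x : String) (t : Tm) (e : Subst) (C : MCtx) :
      CekStep (.eval (.lam x t) e C) (.cont C (.clos x t e))
  | app (t0 t1 : Tm) (e : Subst) (C : MCtx) :
      CekStep (.eval (.app t0 t1) e C) (.eval t0 e (.ARG t1 e C))
  | contEnd (v : Val) : CekStep (.cont .END v) (.done v)
  | contArg (t : Tm) (e : Subst) (C : MCtx) (v : Val) :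
      CekStep (.cont (.ARG t e C) v) (.eval t e (.FUN v C))
  | contFun (x : String) (t : Tm) (e : Subst) (C : MCtx) (v : Val) :
      CekStep (.cont (.FUN (.clos x t e) C) v) (.eval t (.ext x v e) C)

/-!
Refocusing: after contracting a redex in the context `C`, decomposing `plug C c` from the root
passes through `⟨c, C⟩` again, so iterated decompose–contract–plug evaluation is the same as
continuing the decomposition from the contractum in place. This refocused machine is
deterministic and its value states are final, which is what makes the two agree exactly.
The refocused machine is the CEK machine up to stuttering: each CEK transition is a short
corridor of refocused steps between translated configurations, and every state inside a
corridor determines the CEK configuration it leaves from.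
-/

open Relation

inductive RefocusStep : DConf → DConf → Prop
  | decompose {a b : DConf} : DStep a b → RefocusStep a b
  | contract {r : Red} {c : Clo} {C : Ctx} : Contract r c → RefocusStep (.dec r C) (.clos c C)

theorem DStep.rightUnique : Relator.RightUnique DStep := by
  intro _ _ _ h₁ h₂
  cases h₁ <;> cases h₂ <;> rfl

theorem Contract.rightUnique : Relator.RightUnique Contract := by
  intro _ _ _ h₁ h₂
  cases h₁ <;> cases h₂ <;> simp_all

theorem RefocusStep.rightUnique : Relator.RightUnique RefocusStep := by
  rintro _ _ _ (h₁ | h₁) h₂ <;> rcases h₂ with h₂ | h₂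
  · exact DStep.rightUnique h₁ h₂
  · cases h₁
  · cases h₂
  · rw [Contract.rightUnique h₁ h₂]

theorem RefocusStep.not_val {v : Val} {d : DConf} : ¬ RefocusStep (.val v) d := by
  rintro (⟨⟨⟩⟩ | ⟨⟩)

theorem reflTransGen_refocusStep_of_dStep {a b : DConf} (h : ReflTransGen DStep a b) :
    ReflTransGen RefocusStep a b :=
  ReflTransGen.mono (fun _ _ => RefocusStep.decompose) _ _ h

theorem reflTransGen_dStep_plug : ∀ (C : Ctx) (c : Clo),
    ReflTransGen DStep (.clos (plug C c) .hole) (.clos c C)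
  | .hole, _ => .refl
  | .arg C c₁, c₀ => (reflTransGen_dStep_plug C (.app c₀ c₁)).tail (.app c₀ c₁ C)
  | .fnv C ⟨x, t, s⟩, c₁ =>
      (((reflTransGen_dStep_plug C (.app (.sub (.lam x t) s) c₁)).tail (.app _ _ _)).tail
        (.lamsub x t s _)).tail (.contarg C c₁ _)

theorem reflTransGen_dStep_upr (C : Ctx) : ∀ r : Red,
    ReflTransGen DStep (.clos (upr r) C) (.dec r C)
  | .var x s => .single (.varsub x s C)
  | .prop t₀ t₁ s => .single (.appsub t₀ t₁ s C)
  | .app ⟨x₀, t₀, s₀⟩ ⟨x₁, t₁, s₁⟩ =>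
      .head (.app _ _ C) <| .head (.lamsub x₀ t₀ s₀ _) <| .head (.contarg C _ _) <|
        .head (.lamsub x₁ t₁ s₁ _) <| .single (.contfnv C _ _)

def DConf.toClo : DConf → Clo
  | .clos c C => plug C c
  | .cont C v => plug C (upv v)
  | .val v => upv v
  | .dec r C => plug C (upr r)

theorem DStep.toClo_eq {a b : DConf} (h : DStep a b) : a.toClo = b.toClo := by
  cases h <;> rfl

theorem RefocusStep.reflTransGen_reduce_toClo {a b : DConf} (h : RefocusStep a b) :
    ReflTransGen Reduce a.toClo b.toClo := by
  rcases h with h | @⟨r, c, C, hc⟩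
  · rw [h.toClo_eq]
  · exact .single ⟨r, C, c, (reflTransGen_dStep_plug C (upr r)).trans
      (reflTransGen_dStep_upr C r), hc, rfl⟩

theorem reflTransGen_refocusStep_val_of_reduce {c c' : Clo} {v : Val} (h : Reduce c c')
    (h' : ReflTransGen RefocusStep (.clos c' .hole) (.val v)) :
    ReflTransGen RefocusStep (.clos c .hole) (.val v) := by
  obtain ⟨r, C, c₀, hdec, hc, rfl⟩ := h
  have hrefocus := reflTransGen_refocusStep_of_dStep (reflTransGen_dStep_plug C c₀)
  have hcontinue : ReflTransGen RefocusStep (.clos c₀ C) (.val v) := by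
    rcases hrefocus.total_of_right_unique RefocusStep.rightUnique h' with h'' | h''
    · exact h''
    · rcases h''.cases_head with h'' | ⟨_, hval, _⟩
      · exact h'' ▸ .refl
      · exact absurd hval RefocusStep.not_val
  exact ((reflTransGen_refocusStep_of_dStep hdec).tail (.contract hc)).trans hcontinue

theorem reflTransGen_reduce_iff_refocusStep {c : Clo} {v : Val} :
    ReflTransGen Reduce c (upv v) ↔ ReflTransGen RefocusStep (.clos c .hole) (.val v) := by
  constructor
  · intro h
    induction h using ReflTransGen.head_induction_on with
    | refl =>
      obtain ⟨x, t, s⟩ := v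
      exact .tail (.single (.decompose (.lamsub x t s .hole))) (.decompose (.conthole _))
    | head hstep _ ih => exact reflTransGen_refocusStep_val_of_reduce hstep ih
  · exact ReflTransGen.lift' DConf.toClo (fun _ _ => RefocusStep.reflTransGen_reduce_toClo) _ _

def MCtx.toCtx : MCtx → Ctx
  | .END => .hole
  | .ARG t e C => .arg C.toCtx (.sub t e)
  | .FUN v C => .fnv C.toCtx v

def CekConf.toDConf : CekConf → DConf
  | .eval t e C => .clos (.sub t e) C.toCtx
  | .cont C v => .cont C.toCtx v
  | .done v => .val v

theorem CekStep.reflTransGen_refocusStep {k k' : CekConf} (h : CekStep k k') :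
    ReflTransGen RefocusStep k.toDConf k'.toDConf := by
  cases h with
  | var x e v C hv =>
    obtain ⟨y, t, s⟩ := v
    exact .head (.decompose (.varsub x e _)) <| .head (.contract (.var x e _ hv)) <|
      .single (.decompose (.lamsub y t s _))
  | lam x t e C => exact .single (.decompose (.lamsub x t e _))
  | app t₀ t₁ e C =>
    exact .head (.decompose (.appsub t₀ t₁ e _)) <| .head (.contract (.prop t₀ t₁ e)) <|
      .single (.decompose (.app _ _ _))
  | contEnd v => exact .single (.decompose (.conthole v))
  | contArg t e C v => exact .single (.decompose (.contarg _ _ _))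
  | contFun x t e C v =>
    exact .head (.decompose (.contfnv _ _ _)) <| .single (.contract (.beta x t e v))

/-- `Corridor k d`: the refocused machine, started in the translation of `k`, has reached `d`
without yet completing the CEK transition out of `k`. -/
inductive Corridor : CekConf → DConf → Prop
  | start (k : CekConf) : Corridor k k.toDConf
  | varDec (x : String) (e : Subst) (C : MCtx) :
      Corridor (.eval (.var x) e C) (.dec (.var x e) C.toCtx)
  | varContracted (x : String) (e : Subst) (C : MCtx) (v : Val) :
      lookup x e = some v → Corridor (.eval (.var x) e C) (.clos (upv v) C.toCtx)
  | appDec (t₀ t₁ : Tm) (e : Subst) (C : MCtx) :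
      Corridor (.eval (.app t₀ t₁) e C) (.dec (.prop t₀ t₁ e) C.toCtx)
  | appContracted (t₀ t₁ : Tm) (e : Subst) (C : MCtx) :
      Corridor (.eval (.app t₀ t₁) e C) (.clos (.app (.sub t₀ e) (.sub t₁ e)) C.toCtx)
  | funDec (u v : Val) (C : MCtx) :
      Corridor (.cont (.FUN u C) v) (.dec (.app u v) C.toCtx)

theorem Corridor.eq_done {k : CekConf} {v : Val} (h : Corridor k (.val v)) : k = .done v := by
  generalize hd : DConf.val v = d at h
  cases h with
  | start k => cases k <;> simp_all [CekConf.toDConf]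
  | _ => simp_all

theorem Corridor.step {k : CekConf} {d d' : DConf} (hk : Corridor k d) (h : RefocusStep d d') :
    Corridor k d' ∨ ∃ k', CekStep k k' ∧ Corridor k' d' := by
  rcases hk with k | ⟨x, e, C⟩ | ⟨x, e, C, ⟨y, t, s⟩, hv⟩ | ⟨t₀, t₁, e, C⟩ | ⟨t₀, t₁, e, C⟩ |
    ⟨⟨x, t, s⟩, v, C⟩
  · rcases k with ⟨_ | _ | _, e, C⟩ | ⟨_ | _ | _, w⟩ | w <;> rcases h with ⟨⟨⟩⟩ | ⟨⟨⟩⟩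
    · exact .inl (.varDec _ _ _)
    · exact .inr ⟨_, .lam _ _ _ _, .start _⟩
    · exact .inl (.appDec _ _ _ _)
    · exact .inr ⟨_, .contEnd _, .start _⟩
    · exact .inr ⟨_, .contArg _ _ _ _, .start _⟩
    · exact .inl (.funDec _ _ _)
  · rcases h with ⟨⟨⟩⟩ | ⟨⟨_, _, _, hv⟩⟩
    exact .inl (.varContracted _ _ _ _ hv)
  · rcases h with ⟨⟨⟩⟩ | ⟨⟨⟩⟩
    exact .inr ⟨_, .var _ _ _ _ hv, .start _⟩
  · rcases h with ⟨⟨⟩⟩ | ⟨⟨⟩⟩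
    exact .inl (.appContracted _ _ _ _)
  · rcases h with ⟨⟨⟩⟩ | ⟨⟨⟩⟩
    exact .inr ⟨_, .app _ _ _ _, .start _⟩
  · rcases h with ⟨⟨⟩⟩ | ⟨⟨⟩⟩
    exact .inr ⟨_, .contFun _ _ _ _ _, .start _⟩

theorem reflTransGen_cekStep_of_corridor {k : CekConf} {d : DConf} {v : Val}
    (hk : Corridor k d) (h : ReflTransGen RefocusStep d (.val v)) :
    ReflTransGen CekStep k (.done v) := by
  induction h using ReflTransGen.head_induction_on generalizing k with
  | refl => exact hk.eq_done ▸ .refl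
  | head hstep _ ih =>
    rcases hk.step hstep with hk' | ⟨k', hkk', hk'⟩
    · exact ih hk'
    · exact .head hkk' (ih hk')

theorem reflTransGen_cekStep_iff_refocusStep {k : CekConf} {v : Val} :
    ReflTransGen CekStep k (.done v) ↔ ReflTransGen RefocusStep k.toDConf (.val v) :=
  ⟨ReflTransGen.lift' CekConf.toDConf (fun _ _ => CekStep.reflTransGen_refocusStep) _ _,
    reflTransGen_cekStep_of_corridor (.start k)⟩

/-- Syntactic correspondence for the CEK machine: for any closed term t, the
closure t[∅] evaluates to a value v under iterated one-step reduction iff the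
CEK machine, started in ⟨t,∅,[]⟩_eval, halts with the value v. -/
theorem cek_syntactic_correspondence :
    ∀ (t : Tm) (v : Val),
      Relation.ReflTransGen Reduce (.sub t .empty) (upv v) ↔
      Relation.ReflTransGen CekStep (.eval t .empty .END) (.done v) := by
  intro t v
  exact reflTransGen_reduce_iff_refocusStep.trans
    (reflTransGen_cekStep_iff_refocusStep (k := .eval t .empty .END)).symm
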